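/- Let φ(t) := (2π)^{-1/2} e^{-t²/2}, Φ(z) := ∫_{-∞}^{z} φ(t) dt, and for ρ ∈ (−1,1) let h_ρ(x,y) := (2π√(1−ρ²))^{-1} exp(−(x² − 2ρxy + y²)/(2(1−ρ²))). Then for every ρ ∈ (−1,1) and every b ∈ ℝ, the function a ↦ ∫_{-∞}^{a} ∫_{-∞}^{b} h_ρ(x, y) dy dx − Φ(a)Φ(b) is differentiable at every a ∈ ℝ, with derivative φ(a) · (Φ((b − ρa)/√(1−ρ²)) − Φ(b)). -/

import Mathlib

open Real MeasureTheory

/-- The standard normal density `φ(t) = (2π)^{-1/2} e^{-t²/2}`. -/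
noncomputable def stdNormalPDF (t : ℝ) : ℝ := (Real.sqrt (2 * π))⁻¹ * Real.exp (-t ^ 2 / 2)

/-- The standard normal distribution function `Φ(z) = ∫_{-∞}^z φ`. -/
noncomputable def stdNormalCDF (z : ℝ) : ℝ := ∫ t in Set.Iic z, stdNormalPDF t

/-- The bivariate standard normal density with correlation `ρ`. -/
noncomputable def biNormPDF (ρ x y : ℝ) : ℝ :=
  (2 * π * Real.sqrt (1 - ρ ^ 2))⁻¹ *
    Real.exp (-(x ^ 2 - 2 * ρ * x * y + y ^ 2) / (2 * (1 - ρ ^ 2)))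

/-!
Completing the square in the exponent gives `h_ρ(x, y) = φ(x) · s⁻¹ φ((y - ρx) / s)` with
`s = √(1 - ρ²)`, so the affine substitution `y = s t + ρx` turns the inner integral into
`φ(x) Φ((b - ρx) / s)`. This is continuous and dominated by `φ`, and the fundamental theorem of
calculus on `(-∞, a]` differentiates it, as well as `Φ(a) Φ(b)`.
-/

open ProbabilityTheory Set

lemma stdNormalPDF_eq_gaussianPDFReal : stdNormalPDF = gaussianPDFReal 0 1 := by
  ext t
  simp [stdNormalPDF, gaussianPDFReal]

@[fun_prop]
lemma continuous_stdNormalPDF : Continuous stdNormalPDF := by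
  unfold stdNormalPDF
  fun_prop

lemma integrable_stdNormalPDF : Integrable stdNormalPDF :=
  stdNormalPDF_eq_gaussianPDFReal ▸ integrable_gaussianPDFReal 0 1

lemma stdNormalCDF_mem_Icc (z : ℝ) : stdNormalCDF z ∈ Icc 0 1 := by
  rw [stdNormalCDF, stdNormalPDF_eq_gaussianPDFReal]
  refine ⟨setIntegral_nonneg measurableSet_Iic fun t _ => gaussianPDFReal_nonneg 0 1 t, ?_⟩
  rw [← integral_gaussianPDFReal_eq_one 0 one_ne_zero]
  exact setIntegral_le_integral (integrable_gaussianPDFReal 0 1)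
    (Filter.Eventually.of_forall (gaussianPDFReal_nonneg 0 1))

theorem hasDerivAt_integral_Iic {E : Type*} [NormedAddCommGroup E] [NormedSpace ℝ E]
    [CompleteSpace E] {g : ℝ → E} {a : ℝ} (hi : Integrable g) (hc : ContinuousAt g a) :
    HasDerivAt (fun z => ∫ x in Iic z, g x) (g a) a := by
  have hsplit : ∀ z, ∫ x in Iic z, g x = (∫ x in Iic 0, g x) + ∫ x in (0 : ℝ)..z, g x := fun z => by
    rw [← intervalIntegral.integral_Iic_sub_Iic hi.integrableOn hi.integrableOn, add_sub_cancel]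
  rw [funext hsplit]
  exact (intervalIntegral.integral_hasDerivAt_right hi.intervalIntegrable
    hi.aestronglyMeasurable.stronglyMeasurableAtFilter hc).const_add _

lemma hasDerivAt_stdNormalCDF (a : ℝ) : HasDerivAt stdNormalCDF (stdNormalPDF a) a :=
  hasDerivAt_integral_Iic integrable_stdNormalPDF continuous_stdNormalPDF.continuousAt

@[fun_prop]
lemma continuous_stdNormalCDF : Continuous stdNormalCDF :=
  continuous_iff_continuousAt.2 fun a => (hasDerivAt_stdNormalCDF a).continuousAt

theorem integral_Iic_comp_sub_div {E : Type*} [NormedAddCommGroup E] [NormedSpace ℝ E]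
    (f : ℝ → E) {s : ℝ} (hs : 0 < s) (m b : ℝ) :
    ∫ y in Iic b, f ((y - m) / s) = s • ∫ t in Iic ((b - m) / s), f t := by
  have himage : (fun t => s * t + m) '' Iic ((b - m) / s) = Iic b := by
    rw [← image_image (· + m) (s * ·), image_mul_left_Iic hs, image_add_const_Iic,
      mul_div_cancel₀ _ hs.ne', sub_add_cancel]
  rw [← himage, integral_image_eq_integral_abs_deriv_smul (f := fun t => s * t + m)
    (f' := fun _ => s) measurableSet_Iic
    (fun t _ =>
      ((((hasDerivAt_id t).const_mul s).add_const m).congr_deriv (mul_one s)).hasDerivWithinAt)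
    (fun t _ u _ h => by simpa [hs.ne'] using h), ← integral_smul]
  simp [abs_of_pos hs, hs.ne']

lemma integral_Iic_inv_mul_stdNormalPDF_sub_div {s : ℝ} (hs : 0 < s) (m b : ℝ) :
    ∫ y in Iic b, s⁻¹ * stdNormalPDF ((y - m) / s) = stdNormalCDF ((b - m) / s) := by
  rw [integral_const_mul, integral_Iic_comp_sub_div _ hs, smul_eq_mul, inv_mul_cancel_left₀ hs.ne',
    stdNormalCDF]

lemma biNormPDF_eq_mul {ρ : ℝ} (hρ : ρ ^ 2 < 1) (x y : ℝ) :
    biNormPDF ρ x y =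
      stdNormalPDF x * ((√(1 - ρ ^ 2))⁻¹ * stdNormalPDF ((y - ρ * x) / √(1 - ρ ^ 2))) := by
  have hu : 0 < 1 - ρ ^ 2 := by linarith
  have hs2 : √(1 - ρ ^ 2) ^ 2 = 1 - ρ ^ 2 := Real.sq_sqrt hu.le
  have h2π : √(2 * π) ^ 2 = 2 * π := Real.sq_sqrt (by positivity)
  have hexp : -(x ^ 2 - 2 * ρ * x * y + y ^ 2) / (2 * (1 - ρ ^ 2)) =
      -x ^ 2 / 2 + -((y - ρ * x) / √(1 - ρ ^ 2)) ^ 2 / 2 := by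
    rw [div_pow, hs2]
    field_simp
    ring
  rw [biNormPDF, stdNormalPDF, stdNormalPDF, hexp, Real.exp_add]
  field_simp
  rw [h2π]

lemma integral_Iic_biNormPDF {ρ : ℝ} (hρ : ρ ^ 2 < 1) (b x : ℝ) :
    ∫ y in Iic b, biNormPDF ρ x y =
      stdNormalPDF x * stdNormalCDF ((b - ρ * x) / √(1 - ρ ^ 2)) := by
  simp_rw [biNormPDF_eq_mul hρ x]
  rw [integral_const_mul, integral_Iic_inv_mul_stdNormalPDF_sub_div (Real.sqrt_pos.2 (by linarith))]

/-- for `ρ ∈ (-1,1)` and `b : ℝ`, the function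
`a ↦ ∫_{-∞}^a ∫_{-∞}^b h_ρ(x,y) dy dx - Φ(a)Φ(b)` is differentiable everywhere, with
derivative `φ(a)(Φ((b - ρa)/√(1-ρ²)) - Φ(b))`. -/
theorem stmt17 (ρ : ℝ) (hρ : ρ ∈ Set.Ioo (-1 : ℝ) 1) (b : ℝ) :
    ∀ a : ℝ, HasDerivAt
      (fun a : ℝ =>
        (∫ x in Set.Iic a, ∫ y in Set.Iic b, biNormPDF ρ x y) -
          stdNormalCDF a * stdNormalCDF b)
      (stdNormalPDF a *
        (stdNormalCDF ((b - ρ * a) / Real.sqrt (1 - ρ ^ 2)) - stdNormalCDF b)) a := by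
  intro a
  have hρ2 : ρ ^ 2 < 1 := (sq_lt_one_iff_abs_lt_one ρ).2 (abs_lt.2 hρ)
  have hF_int : Integrable fun x => stdNormalPDF x * stdNormalCDF ((b - ρ * x) / √(1 - ρ ^ 2)) :=
    integrable_stdNormalPDF.mul_bdd (by fun_prop : Continuous _).aestronglyMeasurable
      (Filter.Eventually.of_forall fun x => by
        obtain ⟨hΦ_nonneg, hΦ_le_one⟩ := stdNormalCDF_mem_Icc ((b - ρ * x) / √(1 - ρ ^ 2))
        rwa [Real.norm_of_nonneg hΦ_nonneg])
  simp only [integral_Iic_biNormPDF hρ2]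
  refine ((hasDerivAt_integral_Iic hF_int (by fun_prop : Continuous _).continuousAt).sub
    ((hasDerivAt_stdNormalCDF a).mul_const (stdNormalCDF b))).congr_deriv ?_
  ring
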